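/- Let G be a group, H ≤ G a subgroup of index 2, and ρ a finite-dimensional representation of G over a field of characteristic zero such that tr ρ(g) = 0 for all g ∉ H. If ρ is semisimple, then ρ ≅ ρ ⊗ μ, where μ is the nontrivial character of G/H. -/

import Mathlib

/-!
Two finite-dimensional semisimple modules `M`, `N` over a `k`-algebra `A` (`char k = 0`) with
the same trace function are isomorphic: peeling off a simple summand `S` of `M`, it suffices to
find `S` inside `N`. If `S` does not occur in `N`, the `S`-isotypic component `P` of `M × N` lies in
`M × 0`. Being fully invariant, `P` has a fully invariant complement, so the projection onto `P`
commutes with `End_A (M × N)` and, by Jacobson density, is the action of some `a : A`. Then `a`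
kills `N`, so `tr_{M × N} a = tr_M a + tr_N a = 2 tr_N a = 0`, whereas the trace of a projection
is `dim P > 0`.

For `A = k[G]`, `M = ρ` and `N = ρ ⊗ μ` the trace functions agree because `μ = 1` on `H` and
`tr ρ` vanishes off `H`.
-/

open LinearMap Module

section
variable {R M N : Type*} [Ring R] [AddCommGroup M] [Module R M] [AddCommGroup N] [Module R N]

instance [IsSemisimpleModule R M] [IsSemisimpleModule R N] : IsSemisimpleModule R (M × N) := by
  have := IsSemisimpleModule.sup (.range (inl R M N)) (.range (inr R M N))
  rw [sup_range_inl_inr] at this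
  exact .congr Submodule.topEquiv.symm

theorem Submodule.IsFullyInvariant.exists_isCompl [IsSemisimpleModule R M] {P : Submodule R M}
    (hP : P.IsFullyInvariant) : ∃ Q : Submodule R M, Q.IsFullyInvariant ∧ IsCompl P Q := by
  obtain ⟨s, hs, rfl⟩ := isFullyInvariant_iff_sSup_isotypicComponents.mp hP
  have hsSup : ∀ t ⊆ isotypicComponents R M,
      sSup t = ⨆ c ∈ ((↑) : isotypicComponents R M → Submodule R M) ⁻¹' t, (c : Submodule R M) :=
    fun t ht ↦ by rw [← sSup_image, Subtype.image_preimage_coe, Set.inter_eq_right.mpr ht]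
  refine ⟨sSup (isotypicComponents R M \ s),
    isFullyInvariant_iff_sSup_isotypicComponents.mpr ⟨_, Set.sdiff_subset, rfl⟩, ?_, ?_⟩
  · rw [hsSup s hs, hsSup _ Set.sdiff_subset]
    exact ((sSupIndep_iff _).mp (sSupIndep_isotypicComponents R M)).disjoint_biSup_biSup
      (Set.disjoint_sdiff_right.preimage _)
  · rw [codisjoint_iff, ← sSup_union, Set.union_sdiff_cancel hs, sSup_isotypicComponents]

theorem Submodule.commute_projection_of_isFullyInvariant {P Q : Submodule R M}
    (hP : P.IsFullyInvariant) (hQ : Q.IsFullyInvariant) (h : IsCompl P Q) (φ : Module.End R M) :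
    Commute (P.projection Q h) φ :=
  (P.isIdempotentElem_projection h).commute_iff.mpr
    ⟨by rw [range_projection]; exact hP φ, by rw [ker_projection]; exact hQ φ⟩

end

section
variable {k A M N : Type*} [Field k] [Ring A] [Algebra k A]
  [AddCommGroup M] [Module k M] [Module A M] [IsScalarTower k A M]
  [AddCommGroup N] [Module k N] [Module A N] [IsScalarTower k A N]

instance [FiniteDimensional k M] (p : Submodule A M) : FiniteDimensional k p :=
  FiniteDimensional.finiteDimensional_submodule (p.restrictScalars k)

variable (k) in
theorem Module.Finite.moduleEnd [Module.Finite k M] : Module.Finite (Module.End A M) M :=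
  .of_restrictScalars_finite k _ _

variable (k) in
theorem Submodule.IsFullyInvariant.exists_isProj_lsmul [IsSemisimpleModule A M]
    [Module.Finite k M] {P : Submodule A M} (hP : P.IsFullyInvariant) :
    ∃ a : A, IsProj (P.restrictScalars k) (Algebra.lsmul k k M a) := by
  obtain ⟨Q, hQ, hPQ⟩ := hP.exists_isCompl
  have := Module.Finite.moduleEnd k (A := A) (M := M)
  let π : Module.End (Module.End A M) M :=
    { toFun := P.projection Q hPQ
      map_add' := map_add _
      map_smul' φ x := LinearMap.congr_fun
        (Submodule.commute_projection_of_isFullyInvariant hP hQ hPQ φ).eq x }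
  obtain ⟨a, ha⟩ := Module.Finite.toModuleEnd_moduleEnd_surjective π
  have hπ (x : M) : a • x = P.projection Q hPQ x := LinearMap.congr_fun ha x
  exact ⟨a, fun x ↦ show a • x ∈ P from hπ x ▸ P.projection_apply_mem hPQ x,
    fun x hx ↦ (hπ x).trans (P.projection_apply_of_mem_left hPQ hx)⟩

variable (k) in
theorem LinearEquiv.trace_lsmul [FiniteDimensional k M] [FiniteDimensional k N]
    (e : M ≃ₗ[A] N) (a : A) :
    trace k M (Algebra.lsmul k k M a) = trace k N (Algebra.lsmul k k N a) := by
  rw [← trace_conj' _ (e.restrictScalars k)]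
  congr 1
  ext x
  simp [LinearEquiv.conj_apply]

variable (k) in
theorem LinearMap.trace_lsmul_prod [FiniteDimensional k M] [FiniteDimensional k N] (a : A) :
    trace k (M × N) (Algebra.lsmul k k (M × N) a) =
      trace k M (Algebra.lsmul k k M a) + trace k N (Algebra.lsmul k k N a) :=
  trace_prodMap' (Algebra.lsmul k k M a) (Algebra.lsmul k k N a)

variable (k) in
theorem Submodule.trace_lsmul_eq_add_of_isCompl [FiniteDimensional k M] {p q : Submodule A M}
    (h : IsCompl p q) (a : A) :
    trace k M (Algebra.lsmul k k M a) =
      trace k p (Algebra.lsmul k k p a) + trace k q (Algebra.lsmul k k q a) := by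
  rw [← trace_lsmul_prod, (Submodule.prodEquivOfIsCompl p q h).trace_lsmul k]

end

section
variable {k A M N : Type*} [Field k] [CharZero k] [Ring A] [Algebra k A]
  [AddCommGroup M] [Module k M] [Module A M] [IsScalarTower k A M] [FiniteDimensional k M]
  [AddCommGroup N] [Module k N] [Module A N] [IsScalarTower k A N] [FiniteDimensional k N]

theorem finrank_eq_of_trace_lsmul_eq
    (htr : ∀ a : A, trace k M (Algebra.lsmul k k M a) = trace k N (Algebra.lsmul k k N a)) :
    finrank k M = finrank k N := by
  have h1 := htr 1
  simp only [map_one, Module.End.one_eq_id, trace_id] at h1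
  exact_mod_cast h1

theorem exists_linearEquiv_submodule_of_trace_lsmul_eq [IsSemisimpleModule A M]
    [IsSemisimpleModule A N]
    (htr : ∀ a : A, trace k M (Algebra.lsmul k k M a) = trace k N (Algebra.lsmul k k N a))
    (S : Submodule A M) [IsSimpleModule A S] : ∃ S' : Submodule A N, Nonempty (S ≃ₗ[A] S') := by
  by_contra! hS
  set P := isotypicComponent A (M × N) S
  have hN : isotypicComponent A N S = ⊥ :=
    sSup_eq_bot.mpr fun m ⟨e⟩ ↦ (hS m).elim e.symm
  have hPsnd : P ≤ ker (snd A M N) := by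
    simpa [hN] using (snd A M N).le_comap_isotypicComponent S
  obtain ⟨a, ha⟩ := (Submodule.IsFullyInvariant.isotypicComponent A (M × N) S).exists_isProj_lsmul k
  have haN : Algebra.lsmul k k N a = 0 := by
    ext y
    exact hPsnd (ha.map_mem (0, y))
  have hP : P = ⊥ := by
    refine Submodule.restrictScalars_injective k _ _ (ha.submodule_eq_bot_iff.mpr ?_)
    refine ha.isIdempotentElem.eq_zero_of_trace_eq_zero ?_
    rw [trace_lsmul_prod, htr, haN, map_zero, add_zero]
  have hSP : S.map (inl A M N) ≤ P := S.map_le_isotypicComponent _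
  have hS0 : S ≠ ⊥ := (S.nontrivial_iff_ne_bot).mp (IsSimpleModule.nontrivial A S)
  rw [hP, le_bot_iff, ← Submodule.map_bot (inl A M N)] at hSP
  exact hS0 (Submodule.map_injective_of_injective inl_injective hSP)

theorem nonempty_linearEquiv_of_trace_lsmul_eq [IsSemisimpleModule A M] [IsSemisimpleModule A N]
    (htr : ∀ a : A, trace k M (Algebra.lsmul k k M a) = trace k N (Algebra.lsmul k k N a)) :
    Nonempty (M ≃ₗ[A] N) := by
  induction hn : finrank k M using Nat.strong_induction_on generalizing M N with
  | _ n ih =>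
  rcases subsingleton_or_nontrivial M with hM | hM
  · have : Subsingleton N := by
      rw [← Module.finrank_zero_iff (R := k), ← finrank_eq_of_trace_lsmul_eq htr,
        Module.finrank_zero_iff]
      exact hM
    exact ⟨.ofSubsingleton M N⟩
  obtain ⟨S, _⟩ := IsSemisimpleModule.exists_simple_submodule A M
  obtain ⟨S', ⟨e⟩⟩ := exists_linearEquiv_submodule_of_trace_lsmul_eq htr S
  obtain ⟨M₀, hM₀⟩ := exists_isCompl S
  obtain ⟨N₀, hN₀⟩ := exists_isCompl S'
  have htr₀ (a : A) :
      trace k M₀ (Algebra.lsmul k k M₀ a) = trace k N₀ (Algebra.lsmul k k N₀ a) := by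
    have := htr a
    rwa [S.trace_lsmul_eq_add_of_isCompl k hM₀, S'.trace_lsmul_eq_add_of_isCompl k hN₀,
      e.trace_lsmul k, add_right_inj] at this
  have hlt : finrank k M₀ < n := by
    have : Nontrivial S := IsSimpleModule.nontrivial A S
    rw [← hn, ← ((S.prodEquivOfIsCompl M₀ hM₀).restrictScalars k).finrank_eq, finrank_prod]
    have := Module.finrank_pos (R := k) (M := S)
    omega
  obtain ⟨e₀⟩ := ih _ hlt htr₀ rfl
  exact ⟨(S.prodEquivOfIsCompl M₀ hM₀).symm ≪≫ₗ e.prodCongr e₀ ≪≫ₗ S'.prodEquivOfIsCompl N₀ hN₀⟩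

end

namespace Representation

open scoped MonoidAlgebra

section
variable {k G V W : Type*} [Field k] [Monoid G] [AddCommGroup V] [Module k V]
  [AddCommGroup W] [Module k W]

theorem nonempty_equiv_of_character_eq [CharZero k] [FiniteDimensional k V]
    [FiniteDimensional k W] {ρ : Representation k G V} {σ : Representation k G W}
    [IsSemisimpleModule k[G] ρ.asModule] [IsSemisimpleModule k[G] σ.asModule]
    (h : ρ.character = σ.character) : Nonempty (ρ.Equiv σ) := by
  have htr (a : k[G]) : trace k ρ.asModule (Algebra.lsmul k k ρ.asModule a) =
      trace k σ.asModule (Algebra.lsmul k k σ.asModule a) := by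
    induction a using MonoidAlgebra.induction_linear with
    | zero => simp
    | add a b ha hb => simp only [map_add, ha, hb]
    | single g c =>
      change trace k V (ρ.asAlgebraHom _) = trace k W (σ.asAlgebraHom _)
      simp only [asAlgebraHom_single, map_smul]
      exact congrArg (c • ·) (congrFun h g)
  obtain ⟨Φ⟩ := nonempty_linearEquiv_of_trace_lsmul_eq htr
  exact ⟨(IntertwiningMap.equivLinearMapAsModule ρ σ).symm Φ.toLinearMap |>.ofBijective
    Φ.bijective⟩

end

section
variable {k G V : Type*} [Field k] [Monoid G] [AddCommGroup V] [Module k V]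

def twist (ρ : Representation k G V) (μ : G →* kˣ) : Representation k G V where
  toFun g := (μ g : k) • ρ g
  map_one' := by simp
  map_mul' g h := by simp only [map_mul, Units.val_mul, smul_mul_smul_comm]

variable (ρ : Representation k G V) (μ : G →* kˣ)

theorem twist_apply (g : G) : ρ.twist μ g = (μ g : k) • ρ g := rfl

theorem character_twist (g : G) : (ρ.twist μ).character g = μ g * ρ.character g := by
  simp [character, twist_apply]

def subrepresentationTwistOrderIso : Subrepresentation ρ ≃o Subrepresentation (ρ.twist μ) where
  toFun p := ⟨p.toSubmodule, fun g _ hv ↦ (p.toSubmodule.smul_mem_iff' (μ g)).mpr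
    (p.apply_mem_toSubmodule g hv)⟩
  invFun p := ⟨p.toSubmodule, fun g _ hv ↦ (p.toSubmodule.smul_mem_iff' (μ g)).mp
    (p.apply_mem_toSubmodule g hv)⟩
  left_inv _ := rfl
  right_inv _ := rfl
  map_rel_iff' := Iff.rfl

theorem isSemisimpleModule_asModule_twist_iff :
    IsSemisimpleModule k[G] (ρ.twist μ).asModule ↔ IsSemisimpleModule k[G] ρ.asModule := by
  rw [← isSemisimpleRepresentation_iff_isSemisimpleModule_asModule,
    ← isSemisimpleRepresentation_iff_isSemisimpleModule_asModule]
  exact (subrepresentationTwistOrderIso ρ μ).complementedLattice_iff.symm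

end

end Representation

theorem stmt_14_general {G : Type*} [Group G] (H : Subgroup G)
    {k : Type*} [Field k] [CharZero k] {V : Type*} [AddCommGroup V] [Module k V]
    [FiniteDimensional k V] (ρ : Representation k G V)
    (hss : IsSemisimpleModule (MonoidAlgebra k G) ρ.asModule)
    (htr : ∀ g : G, g ∉ H → LinearMap.trace k V (ρ g) = 0)
    (μ : G →* kˣ) (hμ : ∀ g : G, (g ∈ H → (μ g : k) = 1) ∧ (g ∉ H → (μ g : k) = -1)) :
    ∃ e : V ≃ₗ[k] V, ∀ (g : G) (v : V), e (ρ g v) = (μ g : k) • ρ g (e v) := by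
  have hchar : ρ.character = (ρ.twist μ).character := by
    ext g
    rw [Representation.character_twist]
    by_cases hg : g ∈ H
    · rw [(hμ g).1 hg, one_mul]
    · rw [Representation.character, htr g hg, mul_zero]
  have := (ρ.isSemisimpleModule_asModule_twist_iff μ).mpr hss
  obtain ⟨φ⟩ := Representation.nonempty_equiv_of_character_eq hchar
  exact ⟨φ.toLinearEquiv, φ.toIntertwiningMap.isIntertwining⟩

/-- Let `H ≤ G` be a subgroup of index 2, `ρ` a semisimple finite-dimensional
representation of `G` over a field `k` of characteristic zero whose trace vanishes
off `H`, and `μ : G → kˣ` the nontrivial character of `G/H`.  Then `ρ ≅ ρ ⊗ μ`. -/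
theorem stmt_14 {G : Type*} [Group G] (H : Subgroup G) (hH : H.index = 2)
    {k : Type*} [Field k] [CharZero k] {V : Type*} [AddCommGroup V] [Module k V]
    [FiniteDimensional k V] (ρ : Representation k G V)
    (hss : IsSemisimpleModule (MonoidAlgebra k G) ρ.asModule)
    (htr : ∀ g : G, g ∉ H → LinearMap.trace k V (ρ g) = 0)
    (μ : G →* kˣ) (hμ : ∀ g : G, (g ∈ H → (μ g : k) = 1) ∧ (g ∉ H → (μ g : k) = -1)) :
    ∃ e : V ≃ₗ[k] V, ∀ (g : G) (v : V), e (ρ g v) = (μ g : k) • ρ g (e v) :=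
  stmt_14_general H ρ hss htr μ hμ
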